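/- For every z ∈ ℂ⁺, the function u ↦ 1/(−z−u) has a unique fixed point u(z) with Im u(z) > 0, and this fixed point equals (−z + √(z²−4))/2. -/
import Mathlib


/-- For `z ∈ ℂ⁺`, the map `u ↦ 1/(−z−u)` has a unique fixed point with positive imaginary
part, and it equals `(−z + √(z²−4))/2` where the square root has positive imaginary part. -/
theorem stmt8 (z w : ℂ) (hz : 0 < z.im) (hw : w ^ 2 = z ^ 2 - 4) (hwim : 0 < w.im) :
    (∃! u : ℂ, 0 < u.im ∧ u = (-z - u)⁻¹) ∧
    0 < ((-z + w) / 2).im ∧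
    (-z + w) / 2 = (-z - (-z + w) / 2)⁻¹ ∧
    (∀ u : ℂ, 0 < u.im → u = (-z - u)⁻¹ → u = (-z + w) / 2) := by
  set u₁ : ℂ := (-z + w) / 2 with hu1
  set u₂ : ℂ := (-z - w) / 2 with hu2
  have hprod : u₁ * u₂ = 1 := by
    rw [hu1, hu2]
    linear_combination (-1/4 : ℂ) * hw
  have hu1ne : u₁ ≠ 0 := by
    intro h
    rw [h, zero_mul] at hprod
    exact one_ne_zero hprod.symm
  have hu2eq : u₂ = u₁⁻¹ := eq_inv_of_mul_eq_one_left (by linear_combination hprod)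
  have him2 : u₂.im = -u₁.im / Complex.normSq u₁ := by rw [hu2eq, Complex.inv_im]
  have hsum : u₁.im + u₂.im = -z.im := by
    have h : u₁ + u₂ = -z := by rw [hu1, hu2]; ring
    have := congrArg Complex.im h
    simpa using this
  have hdiff : u₁.im - u₂.im = w.im := by
    have h : u₁ - u₂ = w := by rw [hu1, hu2]; ring
    have := congrArg Complex.im h
    simpa using this
  have hns : 0 < Complex.normSq u₁ := Complex.normSq_pos.mpr hu1ne
  have hane : u₁.im ≠ 0 := by
    intro h
    rw [h] at him2
    simp at him2
    rw [h, him2] at hsum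
    simp at hsum
    linarith
  have habneg : u₁.im * u₂.im < 0 := by
    rw [him2]
    have : u₁.im * (-u₁.im / Complex.normSq u₁) = -(u₁.im ^ 2) / Complex.normSq u₁ := by ring
    rw [this]
    apply div_neg_of_neg_of_pos _ hns
    have h2 : 0 < u₁.im * u₁.im := mul_self_pos.mpr hane
    nlinarith
  have ha : 0 < u₁.im := by nlinarith
  have hb : u₂.im < 0 := by nlinarith
  have hu2ne : u₂ ≠ 0 := by
    intro h
    rw [h] at hb
    simp at hb
  have hfix : u₁ = (-z - u₁)⁻¹ := by
    have h : -z - u₁ = u₂ := by rw [hu1, hu2]; ring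
    rw [h]
    exact eq_inv_of_mul_eq_one_left hprod
  have huniq : ∀ u : ℂ, 0 < u.im → u = (-z - u)⁻¹ → u = u₁ := by
    intro u hui hue
    have hne : -z - u ≠ 0 := by
      intro h
      rw [h, inv_zero] at hue
      rw [hue] at hui
      simp at hui
    have hq : u * (-z - u) = 1 := by nth_rewrite 1 [hue]; exact inv_mul_cancel₀ hne
    have hsumeq : u₁ + u₂ = -z := by rw [hu1, hu2]; ring
    have hfac : (u - u₁) * (u - u₂) = 0 := by
      linear_combination -hq + hprod - u * hsumeq
    rcases mul_eq_zero.mp hfac with h | h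
    · exact sub_eq_zero.mp h
    · exfalso
      have : u = u₂ := sub_eq_zero.mp h
      rw [this] at hui
      linarith
  refine ⟨⟨u₁, ⟨ha, hfix⟩, fun y hy => huniq y hy.1 hy.2⟩, ha, hfix, huniq⟩
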